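/- Let g be a unitary automorphism of a hermitian space (V, h) over (E, σ) of dimension d, and write its characteristic polynomial as det(T·id − g) = T^d + b₁ T^{d−1} + … + b_d (with b₀ = 1). Then b_d ≠ 0, σ(b_d)·b_d = 1, and σ(b_d)·b_i = σ(b_{d−i}) for all 0 ≤ i ≤ d; equivalently, the characteristic polynomial P of g satisfies P = P*, where P*(T) = σ(b_d)^{−1} T^d P^σ(T^{−1}) and P^σ applies σ to the coefficients of P. -/

import Mathlib

/-- `P*`: for monic `P` with nonzero constant term `b_d`, `P*(T) = σ(b_d)⁻¹ T^d P^σ(T⁻¹)`. -/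
noncomputable def pstar {k : Type*} [Field k] (σ : k →+* k) (P : Polynomial k) : Polynomial k :=
  Polynomial.C (σ (P.coeff 0))⁻¹ * (P.map σ).reverse

/-!
In a basis, unitarity of `g` reads `Aᵀ H σ(A) = H` with `H` the (invertible) Gram matrix of `h`,
so `σ(A)` is similar to `(A⁻¹)ᵀ`. Hence `P^σ`, the characteristic polynomial of `σ(A)`, is that
of `A⁻¹`, namely the reverse of `P` divided by `(-1)^d det A = b_d`: `P^σ · b_d = rev P`.
Comparing coefficients gives the identities for the `b_i`; applying `σ` once more gives `P = P*`.
-/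

open Polynomial Matrix Module

namespace Matrix

variable {R : Type*} [CommRing R] {n : Type*} [Fintype n] [DecidableEq n]

theorem charpoly_inv_mul_C_coeff_zero {A : Matrix n n R} (hA : IsUnit A.det) :
    A⁻¹.charpoly * C (A.charpoly.coeff 0) = A.charpoly.reverse := by
  have hdet : Ring.inverse A.det * ((-1) ^ Fintype.card n * A.charpoly.coeff 0) = 1 := by
    rw [← det_eq_sign_charpoly_coeff, Ring.inverse_mul_cancel _ hA]
  rw [charpoly_inv A ((isUnit_iff_isUnit_det A).mpr hA), ← reverse_charpoly]
  calc _ = C (Ring.inverse A.det * ((-1) ^ Fintype.card n * A.charpoly.coeff 0))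
          * A.charpoly.reverse := by
        simp only [map_mul, map_pow, map_neg, map_one]; ring
    _ = _ := by rw [hdet, map_one, one_mul]

theorem isUnit_det_of_transpose_mul_mul_map_eq (σ : R →+* R) {A H : Matrix n n R}
    (hH : IsUnit H.det) (hAH : Aᵀ * H * A.map σ = H) : IsUnit A.det := by
  have hdet := congrArg det hAH
  rw [det_mul, det_mul, det_transpose, ← show σ A.det = (A.map σ).det from σ.map_det A] at hdet
  refine IsUnit.of_mul_eq_one (σ A.det) (hH.mul_left_injective ?_)
  simpa [mul_right_comm] using hdet

theorem charpoly_map_eq_charpoly_inv (σ : R →+* R) {A H : Matrix n n R}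
    (hH : IsUnit H.det) (hAH : Aᵀ * H * A.map σ = H) : A.charpoly.map σ = A⁻¹.charpoly := by
  have hA := isUnit_det_of_transpose_mul_mul_map_eq σ hH hAH
  have hconj : A.map σ = H⁻¹ * A⁻¹ᵀ * H := by
    calc A.map σ = H⁻¹ * (A⁻¹ᵀ * Aᵀ) * H * A.map σ := by
          rw [← transpose_mul, mul_nonsing_inv A hA, transpose_one, mul_one,
            nonsing_inv_mul H hH, one_mul]
      _ = _ := by simp only [mul_assoc]; rw [← mul_assoc Aᵀ, hAH]
  rw [← charpoly_map, hconj]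
  exact (charpoly_units_conj' ((isUnit_iff_isUnit_det H).mpr hH).unit A⁻¹ᵀ).trans
    (charpoly_transpose _)

theorem charpoly_map_mul_C_coeff_zero_eq_reverse (σ : R →+* R) {A H : Matrix n n R}
    (hH : IsUnit H.det) (hAH : Aᵀ * H * A.map σ = H) :
    A.charpoly.map σ * C (A.charpoly.coeff 0) = A.charpoly.reverse := by
  rw [charpoly_map_eq_charpoly_inv σ hH hAH,
    charpoly_inv_mul_C_coeff_zero (isUnit_det_of_transpose_mul_mul_map_eq σ hH hAH)]

end Matrix

namespace LinearMap

variable {R : Type*} [CommRing R] {σ : R →+* R} {M : Type*} [AddCommGroup M] [Module R M]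
  {n : Type*} [Fintype n] [DecidableEq n]

theorem transpose_toMatrix_mul_toMatrix₂_mul_map (B : M →ₗ[R] M →ₛₗ[σ] R) (b : Basis n R M)
    (f : M →ₗ[R] M) (i j : n) :
    ((toMatrix b b f)ᵀ * toMatrix₂ b b B * (toMatrix b b f).map σ) i j = B (f (b i)) (f (b j)) := by
  rw [apply_eq_dotProduct_toMatrix₂_mulVec b b, Matrix.mul_apply]
  simp only [RingHom.coe_id, id_eq, dotProduct, mulVec, Function.comp_apply, Matrix.mul_apply,
    transpose_apply, map_apply, toMatrix_apply, Finset.sum_mul, Finset.mul_sum, mul_assoc]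
  exact Finset.sum_comm

theorem SeparatingLeft.det_toMatrix₂_ne_zero [IsDomain R] {B : M →ₗ[R] M →ₛₗ[σ] R}
    (hB : B.SeparatingLeft) (b : Basis n R M) : (LinearMap.toMatrix₂ b b B).det ≠ 0 := by
  intro h0
  obtain ⟨v, hv, hvB⟩ := Matrix.exists_vecMul_eq_zero_iff.mpr h0
  refine hv (b.equivFun.symm.injective ((hB _ fun y => ?_).trans (map_zero _).symm))
  have hrepr : ⇑(b.repr (b.equivFun.symm v)) = v := b.equivFun.apply_symm_apply v
  rw [apply_eq_dotProduct_toMatrix₂_mulVec b b, Matrix.dotProduct_mulVec, RingHom.coe_id,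
    Function.id_comp, hrepr, hvB, zero_dotProduct]

theorem charpoly_map_mul_C_coeff_zero_eq_reverse {K V : Type*} [Field K] [AddCommGroup V]
    [Module K V] [FiniteDimensional K V] (σ : K →+* K) {B : V →ₗ[K] V →ₛₗ[σ] K}
    (hB : B.SeparatingLeft) {f : V →ₗ[K] V} (hf : ∀ x y, B (f x) (f y) = B x y) :
    f.charpoly.map σ * C (f.charpoly.coeff 0) = f.charpoly.reverse := by
  let b := Module.finBasis K V
  rw [← charpoly_toMatrix f b]
  refine Matrix.charpoly_map_mul_C_coeff_zero_eq_reverse σ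
    (hB.det_toMatrix₂_ne_zero b).isUnit (Matrix.ext fun i j => ?_)
  rw [transpose_toMatrix_mul_toMatrix₂_mul_map, hf, toMatrix₂_apply]

end LinearMap

namespace Polynomial

section

variable {R : Type*} [CommRing R] {σ : R →+* R} {P : R[X]}

theorem Monic.map_coeff_zero_mul_coeff_zero_eq_one (hP : P.Monic)
    (hrec : P.map σ * C (P.coeff 0) = P.reverse) : σ (P.coeff 0) * P.coeff 0 = 1 := by
  simpa [coeff_map, hP.leadingCoeff] using congrArg (coeff · 0) hrec

theorem Monic.map_coeff_zero_mul_coeff_natDegree_sub (hP : P.Monic)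
    (hrec : P.map σ * C (P.coeff 0) = P.reverse) {i : ℕ} (hi : i ≤ P.natDegree) :
    σ (P.coeff 0) * P.coeff (P.natDegree - i) = σ (P.coeff i) := by
  have hcoeff := congrArg (coeff · i) hrec
  simp only [coeff_mul_C, coeff_map, coeff_reverse, revAt_le hi] at hcoeff
  rw [← hcoeff, mul_left_comm, hP.map_coeff_zero_mul_coeff_zero_eq_one hrec, mul_one]

end

theorem Monic.eq_pstar {K : Type*} [Field K] {σ : K →+* K} {P : K[X]} (hP : P.Monic)
    (hσ : Function.Involutive σ) (hrec : P.map σ * C (P.coeff 0) = P.reverse) :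
    P = pstar σ P := by
  have hmap : (P.map σ).reverse = P * C (σ (P.coeff 0)) := by
    have hσσ : σ.comp σ = RingHom.id K := RingHom.ext hσ
    rw [reverse, hP.natDegree_map σ, reflect_map, ← reverse, ← hrec]
    simp [Polynomial.map_map, hσσ]
  rw [pstar, hmap, mul_left_comm, ← C_mul,
    inv_mul_cancel₀ (left_ne_zero_of_mul_eq_one (hP.map_coeff_zero_mul_coeff_zero_eq_one hrec)),
    C_1, mul_one]

end Polynomial

theorem stmt8 {E : Type*} [Field E] (σ : E →+* E) (hσ : ∀ x, σ (σ x) = x)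
    {V : Type*} [AddCommGroup V] [Module E V] [FiniteDimensional E V]
    (d : ℕ) (hd : Module.finrank E V = d)
    (h : V →ₗ[E] V →ₛₗ[σ] E)
    (h_nondeg : ∀ x : V, (∀ y : V, h x y = 0) → x = 0)
    (g : V ≃ₗ[E] V) (hg : ∀ x y : V, h (g x) (g y) = h x y) :
    (LinearMap.charpoly g.toLinearMap).coeff 0 ≠ 0 ∧
    σ ((LinearMap.charpoly g.toLinearMap).coeff 0)
      * (LinearMap.charpoly g.toLinearMap).coeff 0 = 1 ∧
    (∀ i ≤ d, σ ((LinearMap.charpoly g.toLinearMap).coeff 0)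
        * (LinearMap.charpoly g.toLinearMap).coeff (d - i)
      = σ ((LinearMap.charpoly g.toLinearMap).coeff i)) ∧
    LinearMap.charpoly g.toLinearMap = pstar σ (LinearMap.charpoly g.toLinearMap) := by
  have hP := LinearMap.charpoly_monic g.toLinearMap
  have hdeg : (LinearMap.charpoly g.toLinearMap).natDegree = d :=
    (LinearMap.charpoly_natDegree _).trans hd
  have hrec := LinearMap.charpoly_map_mul_C_coeff_zero_eq_reverse σ h_nondeg (f := g.toLinearMap) hg
  have hunit := hP.map_coeff_zero_mul_coeff_zero_eq_one hrec
  refine ⟨right_ne_zero_of_mul_eq_one hunit, hunit, fun i hi => ?_, hP.eq_pstar hσ hrec⟩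
  rw [← hdeg] at hi ⊢
  exact hP.map_coeff_zero_mul_coeff_natDegree_sub hrec hi
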